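/- Laplace-method leading asymptotics: if f : ℝ → ℝ is C², has a strict global maximum at 0 with f'(0)=0, f''(0) < 0, and exp(f) is integrable, then ∫ exp(q f(x)) dx ~ exp(q f(0)) √(2π/(q|f''(0)|)) as q → ∞, i.e., the ratio tends to 1. -/

import Mathlib

open MeasureTheory Real Filter Topology

/-!
Put `g x = f x - f 0` and `b = |f''(0)| / 2`. Since `0` is a maximum, `f'(0) = 0`, and l'Hôpital gives
`g x / x ^ 2 → -b`; hence `g x ≤ -(b / 2) x ^ 2` on a ball `|x| ≤ δ`. On that ball the substitution
`x = y / √q` turns `√q ∫ exp (q g)` into the integral of `exp (q g (y / √q))`, which tends pointwise to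
`exp (-b y ^ 2)` under the integrable bound `exp (-(b / 2) y ^ 2)`, so it tends to `√(π / b)` by dominated
convergence. Off the ball `g ≤ -ε`, so `exp (q g) ≤ exp (-(q - 1) ε) exp g` there, and this part
vanishes even after multiplication by `√q`.
-/

theorem tendsto_div_sq_of_hasDerivAt_deriv {g : ℝ → ℝ} {a : ℝ}
    (hg : ∀ᶠ x in 𝓝 0, DifferentiableAt ℝ g x) (hg' : HasDerivAt (deriv g) a 0)
    (hg0 : g 0 = 0) (hd : deriv g 0 = 0) :
    Tendsto (fun x => g x / x ^ 2) (𝓝[≠] 0) (𝓝 (a / 2)) := by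
  have hslope : Tendsto (fun x => deriv g x / deriv (· ^ 2) x) (𝓝[≠] 0) (𝓝 (a / 2)) := by
    refine ((hasDerivAt_iff_tendsto_slope.mp hg').div_const 2).congr fun x => ?_
    simp only [slope_def_field, hd, sub_zero, deriv_pow_field]
    ring
  refine deriv.lhopital_zero_nhdsNE (nhdsWithin_le_nhds hg) ?_ ?_ ?_ hslope
  · filter_upwards [self_mem_nhdsWithin] with x hx
    simpa using hx
  · simpa [hg0] using hg.self_of_nhds.continuousAt.tendsto.mono_left nhdsWithin_le_nhds
  · exact ((continuous_pow 2).tendsto' 0 0 (by simp)).mono_left nhdsWithin_le_nhds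

theorem tendsto_sub_div_sq_of_isLocalMax {f : ℝ → ℝ} (hf : ContDiff ℝ 2 f)
    (hmax : IsLocalMax f 0) :
    Tendsto (fun x => (f x - f 0) / x ^ 2) (𝓝[≠] 0) (𝓝 (deriv (deriv f) 0 / 2)) := by
  have hderiv : deriv (fun x => f x - f 0) = deriv f := funext fun x => deriv_sub_const _
  refine tendsto_div_sq_of_hasDerivAt_deriv
    (Eventually.of_forall fun x => (hf.differentiable two_ne_zero x).sub_const _) ?_ (sub_self _) ?_
  · exact hderiv ▸ (hf.differentiable_deriv_two 0).hasDerivAt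
  · exact hderiv ▸ hmax.deriv_eq_zero

theorem eventually_le_mul_sq_of_tendsto_div_sq {g : ℝ → ℝ} {L c : ℝ}
    (hL : Tendsto (fun x => g x / x ^ 2) (𝓝[≠] 0) (𝓝 L)) (hg0 : g 0 = 0) (hc : L < c) :
    ∀ᶠ x in 𝓝 0, g x ≤ c * x ^ 2 := by
  filter_upwards [eventually_nhdsWithin_iff.mp (hL.eventually (gt_mem_nhds hc))] with x hx
  rcases eq_or_ne x 0 with rfl | hx0
  · simp [hg0]
  · exact ((div_lt_iff₀ (by positivity)).mp (hx hx0)).le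

theorem tendsto_mul_comp_div_sqrt {g : ℝ → ℝ} {L : ℝ}
    (hL : Tendsto (fun x => g x / x ^ 2) (𝓝[≠] 0) (𝓝 L)) (hg0 : g 0 = 0) (y : ℝ) :
    Tendsto (fun q => q * g (y / √q)) atTop (𝓝 (L * y ^ 2)) := by
  rcases eq_or_ne y 0 with rfl | hy
  · simp [hg0]
  have hne : Tendsto (fun q => y / √q) atTop (𝓝[≠] 0) :=
    tendsto_nhdsWithin_iff.mpr ⟨tendsto_const_nhds.div_atTop tendsto_sqrt_atTop,
      (eventually_gt_atTop 0).mono fun q hq => div_ne_zero hy (sqrt_ne_zero'.mpr hq)⟩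
  refine ((hL.comp hne).mul_const (y ^ 2)).congr' ?_
  filter_upwards [eventually_gt_atTop 0] with q hq
  have : (y / √q) ^ 2 = y ^ 2 / q := by rw [div_pow, sq_sqrt hq.le]
  simp only [Function.comp_apply, this]
  field_simp

section ExpMulIntegral

variable {α : Type*} [MeasurableSpace α] {μ : Measure α} {g : α → ℝ}

theorem integrable_exp_mul_of_nonpos (hg : AEStronglyMeasurable g μ)
    (hint : Integrable (fun x => exp (g x)) μ) (hg_nonpos : ∀ x, g x ≤ 0) {q : ℝ} (hq : 1 ≤ q) :
    Integrable (fun x => exp (q * g x)) μ :=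
  hint.mono' (continuous_exp.comp_aestronglyMeasurable (hg.const_mul q)) <|
    Eventually.of_forall fun x => by
      rw [norm_eq_abs, abs_exp, exp_le_exp]
      nlinarith [hg_nonpos x]

theorem setIntegral_exp_mul_le {s : Set α} {ε q : ℝ} (hs : MeasurableSet s)
    (hint : IntegrableOn (fun x => exp (g x)) s μ) (hε : ∀ x ∈ s, g x ≤ -ε) (hq : 1 ≤ q) :
    ∫ x in s, exp (q * g x) ∂μ ≤ exp (-(q - 1) * ε) * ∫ x in s, exp (g x) ∂μ := by
  rw [← integral_const_mul]
  refine integral_mono_of_nonneg (Eventually.of_forall fun x => (exp_pos _).le)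
    (hint.const_mul _) ((ae_restrict_iff' hs).mpr (Eventually.of_forall fun x hx => ?_))
  simp only [← exp_add, exp_le_exp]
  nlinarith [hε x hx]

theorem tendsto_rpow_mul_setIntegral_exp_mul_nhds_zero {s : Set α} {ε : ℝ}
    (hs : MeasurableSet s) (hint : IntegrableOn (fun x => exp (g x)) s μ)
    (hε_pos : 0 < ε) (hε : ∀ x ∈ s, g x ≤ -ε) (p : ℝ) :
    Tendsto (fun q => q ^ p * ∫ x in s, exp (q * g x) ∂μ) atTop (𝓝 0) := by
  set C := ∫ x in s, exp (g x) ∂μ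
  have hbound : Tendsto (fun q => exp ε * C * (q ^ p * exp (-ε * q))) atTop (𝓝 0) := by
    simpa using (tendsto_rpow_mul_exp_neg_mul_atTop_nhds_zero p ε hε_pos).const_mul (exp ε * C)
  refine tendsto_of_tendsto_of_tendsto_of_le_of_le' tendsto_const_nhds hbound ?_ ?_
  · filter_upwards [eventually_ge_atTop 0] with q hq
    exact mul_nonneg (rpow_nonneg hq p) (setIntegral_nonneg hs fun x _ => (exp_pos _).le)
  · filter_upwards [eventually_ge_atTop 1] with q hq
    calc q ^ p * ∫ x in s, exp (q * g x) ∂μ ≤ q ^ p * (exp (-(q - 1) * ε) * C) :=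
          mul_le_mul_of_nonneg_left (setIntegral_exp_mul_le hs hint hε hq)
            (rpow_nonneg (by linarith) p)
      _ = exp ε * C * (q ^ p * exp (-ε * q)) := by
          rw [show -(q - 1) * ε = ε + -ε * q by ring, exp_add]
          ring

end ExpMulIntegral

theorem tendsto_sqrt_mul_setIntegral_closedBall_exp_mul {g : ℝ → ℝ} {b c δ : ℝ}
    (hg : Continuous g) (hg0 : g 0 = 0)
    (hL : Tendsto (fun x => g x / x ^ 2) (𝓝[≠] 0) (𝓝 (-b))) (hδ : 0 < δ) (hc : 0 < c)
    (hbound : ∀ x ∈ Metric.closedBall 0 δ, g x ≤ -c * x ^ 2) :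
    Tendsto (fun q => √q * ∫ x in Metric.closedBall 0 δ, exp (q * g x)) atTop
      (𝓝 √(π / b)) := by
  set s := Metric.closedBall (0 : ℝ) δ
  set G : ℝ → ℝ → ℝ := fun q => s.indicator fun x => exp (q * g x)
  have hrescale : ∀ q ≥ 0, ∫ y, G q (y / √q) = √q * ∫ x in s, exp (q * g x) := by
    intro q hq
    rw [Measure.integral_comp_div, integral_indicator measurableSet_closedBall,
      abs_of_nonneg (sqrt_nonneg q), smul_eq_mul]
  have hmeas : ∀ q, AEStronglyMeasurable (fun y => G q (y / √q)) := fun q =>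
    ((continuous_exp.comp (continuous_const.mul hg)).measurable.indicator
      measurableSet_closedBall).comp (measurable_id.div_const _) |>.aestronglyMeasurable
  have hdom : ∀ q ≥ 1, ∀ y, ‖G q (y / √q)‖ ≤ exp (-c * y ^ 2) := by
    intro q hq y
    by_cases hy : y / √q ∈ s
    · have hq_bound := hbound _ hy
      rw [div_pow, sq_sqrt (by linarith)] at hq_bound
      simp only [G, Set.indicator_of_mem hy, norm_eq_abs, abs_exp, exp_le_exp]
      calc q * g (y / √q) ≤ q * (-c * (y ^ 2 / q)) :=
            mul_le_mul_of_nonneg_left hq_bound (by linarith)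
        _ = -c * y ^ 2 := by field_simp
    · simp [G, Set.indicator_of_notMem hy, (exp_pos _).le]
  have hlim : ∀ y, Tendsto (fun q => G q (y / √q)) atTop (𝓝 (exp (-b * y ^ 2))) := by
    intro y
    have hmem : ∀ᶠ q in atTop, y / √q ∈ s :=
      (tendsto_const_nhds.div_atTop tendsto_sqrt_atTop).eventually
        (Metric.closedBall_mem_nhds 0 hδ)
    refine ((continuous_exp.tendsto _).comp (tendsto_mul_comp_div_sqrt hL hg0 y)).congr' ?_
    filter_upwards [hmem] with q hq
    simp [G, Set.indicator_of_mem hq]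
  have hDCT := tendsto_integral_filter_of_dominated_convergence _
    (Eventually.of_forall hmeas)
    ((eventually_ge_atTop 1).mono fun q hq => Eventually.of_forall (hdom q hq))
    (integrable_exp_neg_mul_sq hc) (Eventually.of_forall hlim)
  rw [integral_gaussian] at hDCT
  exact hDCT.congr' ((eventually_ge_atTop 0).mono hrescale)

theorem nonpos_of_forall_abs_ge_le_neg {g : ℝ → ℝ} (hg0 : g 0 = 0)
    (hsup : ∀ δ > (0 : ℝ), ∃ ε > (0 : ℝ), ∀ x : ℝ, δ ≤ |x| → g x ≤ -ε) (x : ℝ) : g x ≤ 0 := by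
  rcases eq_or_ne x 0 with rfl | hx
  · exact hg0.le
  · obtain ⟨ε, hε, h⟩ := hsup |x| (abs_pos.mpr hx)
    linarith [h x le_rfl]

theorem tendsto_sqrt_mul_integral_exp_mul {g : ℝ → ℝ} {b : ℝ} (hg : Continuous g)
    (hg0 : g 0 = 0) (hL : Tendsto (fun x => g x / x ^ 2) (𝓝[≠] 0) (𝓝 (-b))) (hb : 0 < b)
    (hsup : ∀ δ > (0 : ℝ), ∃ ε > (0 : ℝ), ∀ x : ℝ, δ ≤ |x| → g x ≤ -ε)
    (hint : Integrable (fun x => exp (g x))) :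
    Tendsto (fun q => √q * ∫ x, exp (q * g x)) atTop (𝓝 √(π / b)) := by
  obtain ⟨δ, hδ, hbound⟩ := Metric.nhds_basis_closedBall.eventually_iff.mp
    (eventually_le_mul_sq_of_tendsto_div_sq hL hg0 (by linarith : -b < -(b / 2)))
  obtain ⟨ε, hε, htail⟩ := hsup δ hδ
  set s := Metric.closedBall (0 : ℝ) δ
  have hs : MeasurableSet s := measurableSet_closedBall
  have hcentre := tendsto_sqrt_mul_setIntegral_closedBall_exp_mul hg hg0 hL hδ (half_pos hb)
    fun x hx => hbound hx
  have houter := tendsto_rpow_mul_setIntegral_exp_mul_nhds_zero hs.compl hint.integrableOn hε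
    (fun x hx => htail x (le_of_lt (by simpa [s] using hx))) (1 / 2)
  simp only [← sqrt_eq_rpow] at houter
  refine (add_zero √(π / b) ▸ hcentre.add houter).congr' ?_
  filter_upwards [eventually_ge_atTop 1] with q hq
  rw [← mul_add, integral_add_compl hs (integrable_exp_mul_of_nonpos hg.aestronglyMeasurable hint
    (nonpos_of_forall_abs_ge_le_neg hg0 hsup) hq)]

theorem laplace_method_leading_general (f : ℝ → ℝ) (hf : ContDiff ℝ 2 f)
    (hsup : ∀ δ > (0 : ℝ), ∃ ε > (0 : ℝ), ∀ x : ℝ, δ ≤ |x| → f x ≤ f 0 - ε)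
    (hd2 : deriv (deriv f) 0 < 0)
    (hint : Integrable (fun x => Real.exp (f x))) :
    Tendsto
      (fun q : ℝ =>
        (∫ x : ℝ, Real.exp (q * f x)) /
          (Real.exp (q * f 0) * Real.sqrt (2 * Real.pi / (q * |deriv (deriv f) 0|))))
      atTop (𝓝 1) := by
  set A := |deriv (deriv f) 0| with hA_def
  have hA : 0 < A := abs_pos.mpr hd2.ne
  set g : ℝ → ℝ := fun x => f x - f 0
  have hg0 : g 0 = 0 := sub_self _
  have hsup_g : ∀ δ > (0 : ℝ), ∃ ε > (0 : ℝ), ∀ x : ℝ, δ ≤ |x| → g x ≤ -ε := fun δ hδ =>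
    (hsup δ hδ).imp fun ε ⟨hε, h⟩ => ⟨hε, fun x hx => by linarith [h x hx]⟩
  have hmax : IsLocalMax f 0 := Eventually.of_forall fun x =>
    sub_nonpos.mp (nonpos_of_forall_abs_ge_le_neg hg0 hsup_g x)
  have hL : Tendsto (fun x => g x / x ^ 2) (𝓝[≠] 0) (𝓝 (-(A / 2))) := by
    rw [hA_def, abs_of_neg hd2, neg_div, neg_neg]
    exact tendsto_sub_div_sq_of_isLocalMax hf hmax
  have hint_g : Integrable fun x => exp (g x) :=
    (hint.div_const (exp (f 0))).congr (Eventually.of_forall fun x => (exp_sub _ _).symm)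
  have hcore := tendsto_sqrt_mul_integral_exp_mul (g := g) (hf.continuous.sub continuous_const)
    hg0 hL (half_pos hA) hsup_g hint_g
  rw [show π / (A / 2) = 2 * π / A by field_simp] at hcore
  have hC : √(2 * π / A) ≠ 0 := (sqrt_pos.mpr (div_pos (by positivity) hA)).ne'
  refine (div_self hC ▸ hcore.div_const √(2 * π / A)).congr' ?_
  filter_upwards [eventually_gt_atTop 0] with q hq
  have hfactor : ∀ x, exp (q * f x) = exp (q * f 0) * exp (q * g x) := fun x => by
    rw [← exp_add, mul_sub, add_sub_cancel]
  rw [integral_congr_ae (Eventually.of_forall hfactor), integral_const_mul,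
    show 2 * π / (q * A) = 2 * π / A / q by field_simp, sqrt_div' _ hq.le]
  field_simp

theorem laplace_method_leading (f : ℝ → ℝ) (hf : ContDiff ℝ 2 f)
    (hmax : ∀ x : ℝ, x ≠ 0 → f x < f 0)
    (hsup : ∀ δ > (0 : ℝ), ∃ ε > (0 : ℝ), ∀ x : ℝ, δ ≤ |x| → f x ≤ f 0 - ε)
    (hd1 : deriv f 0 = 0) (hd2 : deriv (deriv f) 0 < 0)
    (hint : Integrable (fun x => Real.exp (f x))) :
    Tendsto
      (fun q : ℝ =>
        (∫ x : ℝ, Real.exp (q * f x)) /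
          (Real.exp (q * f 0) * Real.sqrt (2 * Real.pi / (q * |deriv (deriv f) 0|))))
      atTop (𝓝 1) :=
  laplace_method_leading_general f hf hsup hd2 hint
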